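/- Let F = 𝒫(𝔾) for a nonempty subset 𝔾 ⊆ G(p,V). Then F equals the closure of its interior: F = cl(Int F). -/

import Mathlib

/-! Each condition `tr_W A ≥ 0` cuts out a closed half-space of `Sym²(V)`, so `𝒫(𝔾)` is closed and
convex. It contains the positive cone `𝒫`, and `𝒫` contains the ball of radius `1` about `I`, so
`𝒫(𝔾)` has nonempty interior. A closed convex set with nonempty interior is the closure of its
interior. -/

open Module RealInnerProductSpace

noncomputable section

variable {V : Type*} [NormedAddCommGroup V] [InnerProductSpace ℝ V] [FiniteDimensional ℝ V]

/-- Orthogonal projection onto the subspace `W`, as an endomorphism of `V`. -/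
def projCLM (W : Submodule ℝ V) : V →L[ℝ] V :=
  W.subtypeL.comp (W.orthogonalProjection)

/-- `tr_W A = tr (P_W ∘ A)`, the trace of the restriction of `A` to `W`. -/
def trW (W : Submodule ℝ V) (A : V →L[ℝ] V) : ℝ :=
  LinearMap.trace ℝ V (((projCLM W).comp A : V →L[ℝ] V) : V →ₗ[ℝ] V)

/-- The subequation `𝒫(𝔾) ⊆ Sym²(V)`: self-adjoint endomorphisms `A` with
`tr_W A ≥ 0` for all `W ∈ 𝔾`. -/
def PG (𝔾 : Set (Submodule ℝ V)) : Set (selfAdjoint (V →L[ℝ] V)) :=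
  {A | ∀ W ∈ 𝔾, 0 ≤ trW W (A : V →L[ℝ] V)}

/-- The positive semidefinite cone `𝒫 ⊆ Sym²(V)`. -/
def posSA : Set (selfAdjoint (V →L[ℝ] V)) :=
  {A | ContinuousLinearMap.IsPositive (A : V →L[ℝ] V)}

/-- The identity `I` as an element of `Sym²(V)`. -/
def idSA : selfAdjoint (V →L[ℝ] V) := ⟨1, IsSelfAdjoint.one _⟩

instance selfAdjoint.continuousSMul {R A : Type*} [Semiring R] [StarMul R] [TrivialStar R]
    [TopologicalSpace R] [AddCommGroup A] [Module R A] [StarAddMonoid A] [StarModule R A]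
    [TopologicalSpace A] [ContinuousSMul R A] : ContinuousSMul R (selfAdjoint A) :=
  ContinuousSMul.induced (selfAdjoint.submodule R A).subtype

def trWₗ (W : Submodule ℝ V) : (V →L[ℝ] V) →ₗ[ℝ] ℝ :=
  LinearMap.trace ℝ V ∘ₗ ContinuousLinearMap.coeLM ℝ ∘ₗ
    (ContinuousLinearMap.compL ℝ V V V (projCLM W)).toLinearMap

lemma PG_eq_iInter (𝔾 : Set (Submodule ℝ V)) :
    PG 𝔾 = ⋂ W ∈ 𝔾, {A : selfAdjoint (V →L[ℝ] V) | 0 ≤ trW W A} := by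
  ext A
  simp only [Set.mem_iInter₂]
  rfl

lemma convex_PG (𝔾 : Set (Submodule ℝ V)) : Convex ℝ (PG 𝔾) := by
  rw [PG_eq_iInter]
  exact convex_iInter₂ fun W _ =>
    convex_halfSpace_ge (f := fun A : selfAdjoint (V →L[ℝ] V) => trW W A)
      ⟨fun A B => map_add (trWₗ W) (A : V →L[ℝ] V) B,
        fun c A => map_smul (trWₗ W) c (A : V →L[ℝ] V)⟩ 0

lemma isClosed_PG (𝔾 : Set (Submodule ℝ V)) : IsClosed (PG 𝔾) := by
  rw [PG_eq_iInter]
  exact isClosed_biInter fun W _ => isClosed_le continuous_const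
    ((trWₗ W).continuous_of_finiteDimensional.comp continuous_subtype_val)

lemma trW_nonneg_of_isPositive (W : Submodule ℝ V) {A : V →L[ℝ] V} (hA : A.IsPositive) :
    0 ≤ trW W A := by
  have : ((projCLM W).comp A : V →ₗ[ℝ] V) =
      W.subtype ∘ₗ ((W.orthogonalProjectionOnto ∘L A : V →L[ℝ] W) : V →ₗ[ℝ] W) := rfl
  rw [trW, this, LinearMap.trace_comp_comm']
  exact (hA.orthogonalProjectionOnto_comp W).toLinearMap.trace_nonneg

lemma posSA_subset_PG (𝔾 : Set (Submodule ℝ V)) : posSA ⊆ PG 𝔾 :=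
  fun _ hA W _ => trW_nonneg_of_isPositive W hA

lemma ContinuousLinearMap.isPositive_of_norm_sub_one_le {E : Type*} [NormedAddCommGroup E]
    [InnerProductSpace ℝ E] [CompleteSpace E] {A : E →L[ℝ] E} (hA : IsSelfAdjoint A)
    (h : ‖A - 1‖ ≤ 1) : A.IsPositive := by
  refine (A.isPositive_iff').2 ⟨hA, fun x => ?_⟩
  have hdev : |⟪(A - 1) x, x⟫| ≤ ‖x‖ ^ 2 :=
    calc |⟪(A - 1) x, x⟫| ≤ ‖(A - 1) x‖ * ‖x‖ := abs_real_inner_le_norm _ _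
      _ ≤ ‖A - 1‖ * ‖x‖ * ‖x‖ := by gcongr; exact (A - 1).le_opNorm x
      _ ≤ ‖x‖ ^ 2 := by nlinarith [norm_nonneg x]
  have : ⟪A x, x⟫ = ‖x‖ ^ 2 + ⟪(A - 1) x, x⟫ := by
    rw [sub_apply, inner_sub_left, one_apply_eq_self, real_inner_self_eq_norm_sq]
    ring
  rw [this]
  linarith [neg_abs_le ⟪(A - 1) x, x⟫]

lemma closedBall_idSA_subset_posSA :
    Metric.closedBall (idSA : selfAdjoint (V →L[ℝ] V)) 1 ⊆ posSA :=
  fun A hA => ContinuousLinearMap.isPositive_of_norm_sub_one_le A.2 (by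
    rwa [Metric.mem_closedBall, dist_eq_norm] at hA)

lemma idSA_mem_interior_PG (𝔾 : Set (Submodule ℝ V)) : idSA ∈ interior (PG 𝔾) :=
  mem_interior_iff_mem_nhds.2 <| Filter.mem_of_superset (Metric.closedBall_mem_nhds idSA one_pos)
    (closedBall_idSA_subset_posSA.trans (posSA_subset_PG 𝔾))

theorem statement4_general (𝔾 : Set (Submodule ℝ V)) :
    PG 𝔾 = closure (interior (PG 𝔾)) := by
  rw [(convex_PG 𝔾).closure_interior_eq_closure_of_nonempty_interior
    ⟨idSA, idSA_mem_interior_PG 𝔾⟩, (isClosed_PG 𝔾).closure_eq]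

/-- `F = cl(Int F)` for `F = 𝒫(𝔾)`. -/
theorem statement4 (p : ℕ) (𝔾 : Set (Submodule ℝ V)) (h𝔾 : 𝔾.Nonempty)
    (hGr : ∀ W ∈ 𝔾, finrank ℝ W = p) :
    PG 𝔾 = closure (interior (PG 𝔾)) :=
  statement4_general 𝔾
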